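/- arXiv:2310.19126 — 8 statements merged into one kernel-verified Lean document; each statement's English description precedes it below -/
import Mathlib

section
/- Let P be a finite point set and let α > 1. For any point p ∈ P, apply the robust pruning procedure: sort P \ {p} in increasing distance from p; iteratively select the closest unpruned point u, add u to the output set U, and delete every remaining point w with α·D(u,w) < D(p,w). Then for every q ∈ P \ {p} not in U, there exists u ∈ U with α·D(u,q) ≤ D(p,q). (That is, the graph connecting each p to its pruned output is α-shortcut reachable.) -/
/-- Robust pruning at `p` with parameter `α`: the input list is the candidate set sorted by
increasing distance to `p`; the closest unpruned point `u` is selected, and every remaining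
point `w` with `α * dist u w < dist p w` is deleted. -/
noncomputable def robustPrune {X : Type*} [MetricSpace X] (α : ℝ) (p : X) : List X → List X
  | [] => []
  | u :: rest =>
      u :: robustPrune α p (rest.filter fun w => decide (dist p w ≤ α * dist u w))
termination_by l => l.length
decreasing_by
  simp
  exact (List.length_filter_le _ _).trans (le_of_eq List.length_attach)

private theorem robustPrune_aux {X : Type*} [MetricSpace X] (α : ℝ) (p : X) :
    ∀ (L : List X) (q : X), q ∈ L → q ∉ robustPrune α p L →
      ∃ u ∈ robustPrune α p L, α * dist u q ≤ dist p q
  | [], q, hq, _ => by simp at hq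
  | u :: rest, q, hq, hnot => by
    rw [robustPrune] at hnot ⊢
    rcases List.mem_cons.1 hq with rfl | hq'
    · exact absurd (List.mem_cons_self) hnot
    · by_cases hc : dist p q ≤ α * dist u q
      · have hqf : q ∈ rest.filter fun w => decide (dist p w ≤ α * dist u w) := by
          simp [List.mem_filter, hq', hc]
        have hnot' : q ∉ robustPrune α p (rest.filter fun w => decide (dist p w ≤ α * dist u w)) :=
          fun h => hnot (List.mem_cons_of_mem _ h)
        obtain ⟨v, hv, hvq⟩ := robustPrune_aux α p _ q hqf hnot'
        exact ⟨v, List.mem_cons_of_mem _ hv, hvq⟩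
      · exact ⟨u, List.mem_cons_self, le_of_lt (not_le.1 hc)⟩
termination_by L => L.length
decreasing_by
  simpa using Nat.lt_succ_of_le (List.length_filter_le _ rest)

/-- For any `p ∈ P` and candidate list `L` enumerating `P \ {p}` in increasing
distance from `p`, every `q ∈ P \ {p}` not in the output `U` of robust pruning has some
`u ∈ U` with `α * dist u q ≤ dist p q` (the pruned graph is `α`-shortcut reachable). -/
theorem robustPrune_shortcut_reachable {X : Type*} [MetricSpace X]
    (α : ℝ) (hα : 1 < α) (P : Finset X) (p : X) (hp : p ∈ P)
    (L : List X) (hL : ∀ q, q ∈ L ↔ q ∈ P ∧ q ≠ p) (hnodup : L.Nodup)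
    (hsorted : L.Pairwise fun a b => dist p a ≤ dist p b) :
    ∀ q ∈ P, q ≠ p → q ∉ robustPrune α p L →
      ∃ u ∈ robustPrune α p L, α * dist u q ≤ dist p q := by
  intro q hq hqp hnot
  exact robustPrune_aux α p L q ((hL q).2 ⟨hq, hqp⟩) hnot
end

section
/- Let G be an α-shortcut reachable directed graph (α > 1) on a finite point set P in a metric space, let q be a query point and a ∈ P its nearest neighbor. Define the greedy sequence v₀ = s (any start vertex), and v_{i+1} = the out-neighbor of v_i closest to q. Then for every i, D(v_i, q) ≤ D(s,q)/α^i + ((α+1)/(α-1))·D(a,q). -/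
/-- On an `α`-shortcut reachable graph (`α > 1`) over a finite point set `P`,
the greedy search sequence `v₀ = s`, `v_{i+1} =` out-neighbor of `v_i` closest to the query `q`
(stopping once the nearest neighbor `a` is reached) satisfies
`dist (v i) q ≤ dist s q / α^i + ((α+1)/(α-1)) * dist a q` for every `i`. -/
theorem greedy_key_inequality {X : Type*} [MetricSpace X]
    (α : ℝ) (hα : 1 < α) (P : Finset X) (E : X → X → Prop)
    (hreach : ∀ x ∈ P, ∀ y ∈ P, x ≠ y →
      E x y ∨ ∃ x' ∈ P, E x x' ∧ α * dist x' y ≤ dist x y)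
    (q : X) (a : X) (ha : a ∈ P) (hnear : ∀ p ∈ P, dist a q ≤ dist p q)
    (s : X) (hs : s ∈ P)
    (v : ℕ → X) (hv0 : v 0 = s) (hvP : ∀ i, v i ∈ P)
    (hstep : ∀ i, ∀ u ∈ P, E (v i) u → dist (v (i + 1)) q ≤ dist u q)
    (hstop : ∀ i, v i = a → v (i + 1) = a) :
    ∀ i : ℕ, dist (v i) q ≤ dist s q / α ^ i + (α + 1) / (α - 1) * dist a q := by
  have hα0 : (0:ℝ) < α := lt_trans one_pos hα
  have haq : (0:ℝ) ≤ dist a q := dist_nonneg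
  have key : ∀ i, dist (v (i+1)) q ≤ dist (v i) q / α + (1 + 1/α) * dist a q := by
    intro i
    have hvq : (0:ℝ) ≤ dist (v i) q := dist_nonneg
    by_cases hva : v i = a
    · rw [hstop i hva]
      have h1 : (0:ℝ) ≤ dist (v i) q / α := div_nonneg hvq hα0.le
      have h3 : (0:ℝ) ≤ (1/α) * dist a q := by positivity
      nlinarith
    · rcases hreach (v i) (hvP i) a ha hva with hE | ⟨x', hx'P, hE, hsh⟩
      · have h1 := hstep i a ha hE
        have h2 : (0:ℝ) ≤ dist (v i) q / α := div_nonneg hvq hα0.le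
        have h3 : (0:ℝ) ≤ (1/α) * dist a q := by positivity
        nlinarith
      · have h1 := hstep i x' hx'P hE
        have h2 : dist x' q ≤ dist x' a + dist a q := dist_triangle _ _ _
        have h4 : dist (v i) a ≤ dist (v i) q + dist q a := dist_triangle _ _ _
        rw [dist_comm q a] at h4
        rw [div_add' _ _ _ (ne_of_gt hα0), le_div_iff₀ hα0]
        have hc : (1/α) * α = 1 := one_div_mul_cancel (ne_of_gt hα0)
        nlinarith [mul_le_mul_of_nonneg_right h1 hα0.le, mul_le_mul_of_nonneg_right h2 hα0.le]
  intro i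
  induction i with
  | zero =>
      rw [hv0]
      simp only [pow_zero, div_one]
      have hC : (0:ℝ) ≤ (α + 1) / (α - 1) := div_nonneg (by linarith) (by linarith)
      nlinarith
  | succ n ih =>
      have hk := key n
      have hpow : (0:ℝ) < α ^ n := pow_pos hα0 n
      have hmono : dist (v n) q / α ≤ (dist s q / α ^ n + (α + 1) / (α - 1) * dist a q) / α :=
        (div_le_div_iff_of_pos_right hα0).mpr ih
      have heq : (dist s q / α ^ n + (α + 1) / (α - 1) * dist a q) / α + (1 + 1/α) * dist a q
          = dist s q / α ^ (n + 1) + (α + 1) / (α - 1) * dist a q := by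
        have hne : α - 1 ≠ 0 := by linarith
        have hne' : α ≠ 0 := ne_of_gt hα0
        have hpne : (α:ℝ) ^ n ≠ 0 := ne_of_gt hpow
        rw [pow_succ]
        field_simp
        ring
      calc dist (v (n + 1)) q ≤ dist (v n) q / α + (1 + 1/α) * dist a q := hk
        _ ≤ (dist s q / α ^ n + (α + 1) / (α - 1) * dist a q) / α + (1 + 1/α) * dist a q := by
            linarith
        _ = _ := heq
end

section
/- Let G be an α-shortcut reachable graph (α > 1) on finite P with minimum pairwise distance D_min and maximum pairwise distance D_max, Δ = D_max/D_min. Let q be a query with nearest neighbor a ∈ P satisfying D(a,q) < ((α-1)/(4(α+1)))·D_min, and v_i the greedy sequence from s with D(s,q) ≤ 2·D_max. Then any v_i with v_i ≠ a satisfies D(v_i,q) > D_min/2; consequently the greedy search reaches the exact nearest neighbor a within at most log_α(8Δ) steps. -/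
/-- Greedy search on an `α`-shortcut reachable graph: if `dist s q ≤ 2 * Dmax`
and the nearest neighbor `a` satisfies `dist a q < ((α-1)/(4(α+1))) * Dmin`, then every greedy
iterate `v i ≠ a` is at distance greater than `Dmin/2` from `q`; consequently greedy search
reaches the exact nearest neighbor `a` within `log_α (8Δ)` steps, `Δ = Dmax/Dmin`. -/
theorem greedy_exact_nn {X : Type*} [MetricSpace X]
    (α : ℝ) (hα : 1 < α) (P : Finset X) (q : X)
    (a s : X) (ha : a ∈ P) (hs : s ∈ P)
    (hnear : ∀ p ∈ P, dist a q ≤ dist p q)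
    (Dmin Dmax : ℝ) (hDmin : 0 < Dmin)
    (hmin : ∀ x ∈ P, ∀ y ∈ P, x ≠ y → Dmin ≤ dist x y)
    (hmax : ∀ x ∈ P, ∀ y ∈ P, dist x y ≤ Dmax)
    (v : ℕ → X) (hv0 : v 0 = s) (hvP : ∀ i, v i ∈ P)
    (hkey : ∀ i : ℕ, dist (v i) q ≤ dist s q / α ^ i + (α + 1) / (α - 1) * dist a q)
    (hclose : dist s q ≤ 2 * Dmax)
    (haq : dist a q < (α - 1) / (4 * (α + 1)) * Dmin) :
    (∀ i : ℕ, v i ≠ a → Dmin / 2 < dist (v i) q) ∧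
    (∀ i : ℕ, Real.logb α (8 * (Dmax / Dmin)) < (i : ℝ) → v i = a) := by
  have hα1 : (0:ℝ) < α - 1 := by linarith
  have hα2 : (0:ℝ) < α + 1 := by linarith
  -- (α-1)/(4(α+1)) < 1/4
  have hfrac : (α - 1) / (4 * (α + 1)) * Dmin < Dmin / 4 := by
    rw [div_mul_eq_mul_div, div_lt_div_iff₀ (by linarith) (by norm_num)]
    nlinarith
  have haq4 : dist a q < Dmin / 4 := lt_trans haq hfrac
  have part1 : ∀ i : ℕ, v i ≠ a → Dmin / 2 < dist (v i) q := by
    intro i hne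
    have h1 : Dmin ≤ dist (v i) a := hmin _ (hvP i) _ ha hne
    have h2 : dist (v i) a ≤ dist (v i) q + dist a q := by
      calc dist (v i) a ≤ dist (v i) q + dist q a := dist_triangle _ _ _
        _ = dist (v i) q + dist a q := by rw [dist_comm q a]
    linarith
  refine ⟨part1, ?_⟩
  intro i hi
  by_contra hne
  have h1 := part1 i hne
  have h2 := hkey i
  have hαpow : (0:ℝ) < α ^ i := pow_pos (by linarith) i
  -- (α+1)/(α-1) * dist a q < Dmin/4
  have h3 : (α + 1) / (α - 1) * dist a q < Dmin / 4 := by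
    have : (α + 1) / (α - 1) * ((α - 1) / (4 * (α + 1)) * Dmin) = Dmin / 4 := by
      field_simp
    calc (α + 1) / (α - 1) * dist a q
        < (α + 1) / (α - 1) * ((α - 1) / (4 * (α + 1)) * Dmin) := by
          apply mul_lt_mul_of_pos_left haq (div_pos hα2 hα1)
      _ = Dmin / 4 := this
  have h4 : Dmin / 4 < dist s q / α ^ i := by linarith
  have hDmax : Dmin ≤ Dmax := le_trans (hmin _ (hvP i) _ ha hne) (hmax _ (hvP i) _ ha)
  -- so α^i < 8 * Dmax / Dmin
  have h5 : α ^ i * Dmin < 8 * Dmax := by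
    have := (div_lt_div_iff₀ (by norm_num) hαpow).mp h4
    nlinarith
  -- from hi : logb α (8Δ) < i, get 8Δ < α^i
  have hDmax0 : (0:ℝ) < Dmax := lt_of_lt_of_le hDmin hDmax
  have hΔpos : (0:ℝ) < 8 * (Dmax / Dmin) := by positivity
  have h6 : 8 * (Dmax / Dmin) < α ^ (i:ℝ) :=
    (Real.logb_lt_iff_lt_rpow hα hΔpos).mp hi
  rw [Real.rpow_natCast] at h6
  have : 8 * Dmax < α ^ i * Dmin := by
    have := (mul_lt_mul_of_pos_right h6 hDmin)
    calc 8 * Dmax = 8 * (Dmax / Dmin) * Dmin := by field_simp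
      _ < α ^ i * Dmin := this
  linarith
end

section
/- Fix α > 1 and β = max(1/(α-1), α-1), k ≥ 2, n = 2k. Consider the 1-dimensional point set x_i = α^i for 1 ≤ i ≤ k and x_i = 2α^k + α^k β − α^{2k+1−i} for k < i ≤ n. For every i with k < i ≤ n and every j with k < j < i, one has (x_j − x_k)/(x_i − x_k) ≥ 1/α; consequently, in the robust pruning of vertex i with parameter α, the point x_k is never deleted by any such x_j, and the edge (i,k) is present in the resulting graph. -/
/-- The 1-dimensional lower-bound instance: `x_i = α^i` for `1 ≤ i ≤ k` and
`x_i = 2α^k + α^k·β − α^(2k+1−i)` for `k < i ≤ 2k`, where `β = max (1/(α-1)) (α-1)`. -/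
noncomputable def linePoint (α : ℝ) (k : ℕ) (i : ℕ) : ℝ :=
  if i ≤ k then α ^ i
  else 2 * α ^ k + α ^ k * max (1 / (α - 1)) (α - 1) - α ^ (2 * k + 1 - i)

/-- For `k < j < i ≤ n = 2k`, `(x_j − x_k)/(x_i − x_k) ≥ 1/α`; hence in
robust pruning of vertex `i` with parameter `α`, the point `x_k` is never deleted by such an
`x_j` (the deletion condition `α·|x_j − x_k| < |x_i − x_k|` fails). -/
theorem line_right_half_keeps_k (α : ℝ) (hα : 1 < α) (k n : ℕ) (hk : 2 ≤ k)
    (hn : n = 2 * k) :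
    ∀ i j : ℕ, k < i → i ≤ n → k < j → j < i →
      1 / α ≤ (linePoint α k j - linePoint α k k) / (linePoint α k i - linePoint α k k) ∧
      ¬ (α * |linePoint α k j - linePoint α k k| < |linePoint α k i - linePoint α k k|) := by
  intro i j hki hin hkj hji
  subst hn
  have hα0 : (0:ℝ) < α := lt_trans one_pos hα
  set β : ℝ := max (1 / (α - 1)) (α - 1) with hβdef
  have hβ1 : 1 / (α - 1) ≤ β := le_max_left _ _
  have hα1 : (0:ℝ) < α - 1 := by linarith
  have hβmul : 1 ≤ (α - 1) * β := by
    have := (div_le_iff₀ hα1).mp hβ1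
    linarith [this]
  have hβpos : 0 < β := lt_of_lt_of_le (by positivity) hβ1
  -- unfold the points
  have hxk : linePoint α k k = α ^ k := by simp [linePoint]
  have hxi : linePoint α k i = 2 * α ^ k + α ^ k * β - α ^ (2 * k + 1 - i) := by
    simp [linePoint, not_le.mpr hki, hβdef, one_div]
  have hxj : linePoint α k j = 2 * α ^ k + α ^ k * β - α ^ (2 * k + 1 - j) := by
    simp [linePoint, not_le.mpr hkj, hβdef, one_div]
  set e : ℕ := 2 * k + 1 - i with he
  set f : ℕ := 2 * k + 1 - j with hf
  have hek : e ≤ k := by omega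
  have hfk : f ≤ k := by omega
  have hpe : α ^ e ≤ α ^ k := pow_le_pow_right₀ (le_of_lt hα) hek
  have hpf : α ^ f ≤ α ^ k := pow_le_pow_right₀ (le_of_lt hα) hfk
  have hpf1 : α ^ (f + 1) ≤ α ^ (k + 1) := pow_le_pow_right₀ (le_of_lt hα) (by omega)
  have hsuccf : α ^ (f + 1) = α ^ f * α := pow_succ α f
  have hsucck : α ^ (k + 1) = α ^ k * α := pow_succ α k
  have hpk : (0:ℝ) < α ^ k := pow_pos hα0 k
  have hpe0 : (0:ℝ) < α ^ e := pow_pos hα0 e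
  have hA : linePoint α k j - linePoint α k k = α ^ k + α ^ k * β - α ^ f := by
    rw [hxj, hxk]; ring
  have hB : linePoint α k i - linePoint α k k = α ^ k + α ^ k * β - α ^ e := by
    rw [hxi, hxk]; ring
  have hApos : 0 < linePoint α k j - linePoint α k k := by
    rw [hA]; nlinarith
  have hBpos : 0 < linePoint α k i - linePoint α k k := by
    rw [hB]; nlinarith
  -- key inequality: α * (x_j - x_k) ≥ x_i - x_k
  have hkey : linePoint α k i - linePoint α k k
      ≤ α * (linePoint α k j - linePoint α k k) := by
    rw [hA, hB]
    nlinarith [hpf1, hsuccf, hsucck, hβmul, hpk, hpe0]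
  constructor
  · rw [div_le_div_iff₀ hα0 hBpos]
    linarith
  · rw [abs_of_pos hApos, abs_of_pos hBpos]
    push_neg
    linarith
end

section
/- With the same 1-dimensional instance (α > 1, β = max(1/(α-1), α-1), x_i = α^i for 1 ≤ i ≤ k, x_i = 2α^k + α^k β − α^{2k+1−i} for k < i ≤ 2k): for every i with k < i ≤ 2k and every j < k, one has (x_k − x_j)/(x_i − x_j) ≤ 1/α; hence x_k deletes every x_j with j < k from the candidate list of vertex i during robust pruning, so vertex i has no edge to any vertex j < k in the resulting graph. -/
/-- For `k < i ≤ 2k` and `1 ≤ j < k`, `(x_k − x_j)/(x_i − x_j) ≤ 1/α`,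
i.e. `α·(x_k − x_j) ≤ x_i − x_j`; hence `x_k` deletes every `x_j` with `j < k` from the
candidate list of vertex `i` during robust pruning, so vertex `i` gets no edge to any `j < k`. -/
theorem line_k_deletes_left (α : ℝ) (hα : 1 < α) (k : ℕ) (hk : 2 ≤ k) :
    ∀ i j : ℕ, k < i → i ≤ 2 * k → 1 ≤ j → j < k →
      (linePoint α k k - linePoint α k j) / (linePoint α k i - linePoint α k j) ≤ 1 / α ∧
      α * (linePoint α k k - linePoint α k j) ≤ linePoint α k i - linePoint α k j := by
  intro i j hki hik hj hjk
  have hα0 : (0:ℝ) < α := lt_trans one_pos hα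
  have h1 : linePoint α k k = α ^ k := by simp [linePoint]
  have h2 : linePoint α k j = α ^ j := by simp [linePoint, hjk.le]
  have h3 : linePoint α k i
      = 2 * α ^ k + α ^ k * max (1 / (α - 1)) (α - 1) - α ^ (2 * k + 1 - i) := by
    simp [linePoint, not_le.mpr hki]
  have hle : α ^ (2 * k + 1 - i) ≤ α ^ k := pow_le_pow_right₀ hα.le (by omega)
  have hβ : α ^ k * (α - 1) ≤ α ^ k * max (1 / (α - 1)) (α - 1) :=
    mul_le_mul_of_nonneg_left (le_max_right _ _) (pow_nonneg hα0.le _)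
  have hjj : α ^ j < α ^ (j + 1) := pow_lt_pow_right₀ hα (by omega)
  have hk1 : α * α ^ k = α ^ (k + 1) := by ring
  have hj1 : α * α ^ j = α ^ (j + 1) := by ring
  have key : α * (linePoint α k k - linePoint α k j) ≤ linePoint α k i - linePoint α k j := by
    rw [h1, h2, h3]
    nlinarith [pow_pos hα0 j, pow_pos hα0 k]
  have hden : 0 < linePoint α k i - linePoint α k j := by
    have hjk' : α ^ j < α ^ k := pow_lt_pow_right₀ hα hjk
    have : 0 < α * (linePoint α k k - linePoint α k j) := by
      rw [h1, h2]; nlinarith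
    linarith
  refine ⟨?_, key⟩
  rw [div_le_div_iff₀ hden hα0]
  linarith
end

section
/- Consider the 1-dimensional instance above (n = 2k points) with query q = 0. In the directed graph where: each vertex i with k < i ≤ n has an edge to k but no edge to any j < k, and each vertex i ≤ k has exactly one out-edge to vertex i−1 among the vertices to its left; any directed path from a starting vertex s > k to any vertex x_j with x_j ≤ c·x_1 for a constant c (an O(1)-approximate nearest neighbor of q, whose nearest neighbor is x_1 = α) must have length at least k − log_α(c) − 1. In particular, greedy search from s must scan Ω(n) = Ω(log_α Δ) vertices before reaching an O(1)-approximate nearest neighbor, where Δ = x_n/(x_2 − x_1) is the aspect ratio. -/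
/-- On the 1-dimensional instance with query `q = 0`, in any directed graph
where each vertex `i` with `k < i ≤ n` has an edge to `k` but none to any `j < k`, and each
vertex `i ≤ k` has its unique left-edge to `i − 1`, every directed path from a start vertex
`s > k` to a vertex `j` with `x_j ≤ c · x_1` (an `O(1)`-approximate nearest neighbor of `q`,
whose exact nearest neighbor is `x_1 = α`) has length at least `k − log_α c − 1`. -/
theorem line_path_lower_bound (α : ℝ) (hα : 1 < α) (k n : ℕ) (hk : 2 ≤ k)
    (hn : n = 2 * k) (E : ℕ → ℕ → Prop)
    (hright : ∀ i : ℕ, k < i → i ≤ n → E i k ∧ ∀ j : ℕ, 1 ≤ j → j < k → ¬ E i j)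
    (hleft : ∀ i : ℕ, 2 ≤ i → i ≤ k → ∀ j : ℕ, 1 ≤ j → j < i → (E i j ↔ j = i - 1))
    (c : ℝ) (hc : 1 ≤ c)
    (s : ℕ) (hs : k < s) (hsn : s ≤ n)
    (m : ℕ) (p : ℕ → ℕ) (hp0 : p 0 = s)
    (hrange : ∀ t : ℕ, t ≤ m → 1 ≤ p t ∧ p t ≤ n)
    (hpath : ∀ t : ℕ, t < m → E (p t) (p (t + 1)))
    (hend : linePoint α k (p m) ≤ c * linePoint α k 1) :
    (k : ℝ) - Real.logb α c - 1 ≤ (m : ℝ) := by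

  have hα0 : (0:ℝ) < α := by linarith
  have key : ∀ t, t ≤ m → k ≤ p t + t := by
    intro t
    induction t with
    | zero => intro _; simp [hp0]; omega
    | succ t ih =>
      intro ht
      have ht' : t ≤ m := by omega
      have hkt := ih ht'
      have hE := hpath t (by omega)
      have hr1 := hrange t ht'
      have hr2 := hrange (t+1) ht
      by_cases hpt : p t ≤ k
      · by_cases hlt : p (t+1) < p t
        · have h2 : 2 ≤ p t := by omega
          have := (hleft (p t) h2 hpt (p (t+1)) hr2.1 hlt).mp hE
          omega
        · omega
      · by_cases h : p (t+1) < k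
        · exact absurd hE ((hright (p t) (by omega) hr1.2).2 (p (t+1)) hr2.1 h)
        · omega
  have hkm := key m le_rfl
  have h1k : 1 ≤ k := by omega
  have hx1 : linePoint α k 1 = α := by
    simp only [linePoint, if_pos h1k, pow_one]
  rw [hx1] at hend
  have hc0 : (0:ℝ) < c := by linarith
  have hlog : ∀ j : ℕ, α ^ j ≤ c → (j:ℝ) ≤ Real.logb α c := by
    intro j hj
    have h1 : Real.logb α (α ^ j) = j := by
      rw [Real.logb_pow, Real.logb_self_eq_one hα]; ring
    calc (j:ℝ) = Real.logb α (α ^ j) := h1.symm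
      _ ≤ Real.logb α c := (Real.logb_le_logb hα (by positivity) hc0).mpr hj
  have hrm := hrange m le_rfl
  by_cases hpm : p m ≤ k
  · have hval : linePoint α k (p m) = α ^ p m := by simp [linePoint, hpm]
    have hpow : α ^ (p m - 1) * α ≤ c * α := by
      have : α ^ (p m - 1) * α = α ^ p m := by
        rw [← pow_succ]; congr 1; omega
      rw [this, ← hval]; exact hend
    have hpow' : α ^ (p m - 1) ≤ c := le_of_mul_le_mul_right hpow hα0
    have hl := hlog (p m - 1) hpow'
    have hcast : ((p m - 1 : ℕ) : ℝ) = (p m : ℝ) - 1 := by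
      have : 1 ≤ p m := hrm.1
      push_cast [this]; ring
    rw [hcast] at hl
    have hkm' : (k:ℝ) ≤ (p m : ℝ) + m := by exact_mod_cast hkm
    linarith
  · have hval : linePoint α k (p m) =
        2 * α ^ k + α ^ k * max (1 / (α - 1)) (α - 1) - α ^ (2 * k + 1 - p m) := by
      simp [linePoint, hpm]
    have hle : α ^ (2 * k + 1 - p m) ≤ α ^ k :=
      pow_le_pow_right₀ (le_of_lt hα) (by omega)
    have hb : (0:ℝ) ≤ α ^ k * max (1 / (α - 1)) (α - 1) := by
      apply mul_nonneg (by positivity)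
      exact le_trans (by linarith) (le_max_right _ _)
    have hak : α ^ k ≤ c * α := by
      rw [hval] at hend; linarith
    have hpow' : α ^ (k - 1) ≤ c := by
      have : α ^ (k - 1) * α = α ^ k := by
        rw [← pow_succ]; congr 1; omega
      have h2 : α ^ (k-1) * α ≤ c * α := by rw [this]; exact hak
      exact le_of_mul_le_mul_right h2 hα0
    have hl := hlog (k - 1) hpow'
    have hcast : ((k - 1 : ℕ) : ℝ) = (k : ℝ) - 1 := by
      push_cast [h1k]; ring
    rw [hcast] at hl
    have : (0:ℝ) ≤ m := Nat.cast_nonneg m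
    linarith
end

section
/- In the lower-bound instance for the approximation ratio of slow-preprocessing DiskANN in the plane with ℓ₁ distance: let P be a √n × √n grid of side length 0.5ε/√n (ε < 0.01) with upper-right corner p₀, and let p' and a be points with D(p₀, p') = 2, D(p', a) = 2/(α-1), D(p₀, a) = 2α/(α-1), with all points of P at ℓ₁-distance greater than these from p' and a respectively (D(p,p') > 2 and D(p,a) > 2α/(α-1) for all p ∈ P, p ≠ p₀ having the strict inequalities, and p₀ having equality). Then for every p ∈ P: α·D(p', a) ≤ D(p, a), so in robust pruning at p with parameter α, point p' (which is closer to p than a) deletes a; hence no vertex of P has an edge to a. -/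
/-- The plane with the `ℓ₁` metric. -/
abbrev L1Plane : Type := PiLp 1 (fun _ : Fin 2 => ℝ)

/-- In the `ℓ₁`-plane lower-bound instance for slow-preprocessing DiskANN:
`P` is the grid point set with upper-right corner `p₀`, and `p'`, `a` satisfy
`D(p₀,p') = 2`, `D(p',a) = 2/(α-1)`, `D(p₀,a) = 2α/(α-1)`, while every other `p ∈ P` has
`D(p,p') > 2` and `D(p,a) > 2α/(α-1)`. Then for every `p ∈ P`, `α·D(p',a) ≤ D(p,a)` (strictly
for `p ≠ p₀`), so in robust pruning at `p` the point `p'` deletes `a`; hence no vertex of `P`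
keeps an edge to `a`. -/
theorem l1_instance_prunes_answer (α : ℝ) (hα : 1 < α)
    (P : Finset L1Plane) (p₀ p' a : L1Plane) (hp₀ : p₀ ∈ P)
    (h₁ : dist p₀ p' = 2) (h₂ : dist p' a = 2 / (α - 1)) (h₃ : dist p₀ a = 2 * α / (α - 1))
    (hP : ∀ p ∈ P, p ≠ p₀ → 2 < dist p p' ∧ 2 * α / (α - 1) < dist p a) :
    ∀ p ∈ P, α * dist p' a ≤ dist p a ∧ (p ≠ p₀ → α * dist p' a < dist p a) := by
  intro p hp
  have key : α * dist p' a = 2 * α / (α - 1) := by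
    rw [h₂]; field_simp
  by_cases hpe : p = p₀
  · subst hpe
    exact ⟨by rw [key, h₃], fun h => absurd rfl h⟩
  · have := (hP p hp hpe).2
    exact ⟨by rw [key]; linarith, fun _ => by rw [key]; linarith⟩
end

section
/- Let G be an α-shortcut reachable graph (α > 1) on finite P, q a query point, a ∈ P its nearest neighbor, and v any vertex with d = D(v,q). Then there exists an out-neighbor u of v (possibly u = a) with D(u,q) ≤ (d + D(a,q))/α + D(a,q). Consequently, a single step of greedy search (choosing the out-neighbor closest to q) from v reaches a vertex at distance at most (d + D(a,q))/α + D(a,q) from q. -/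
/-- On an `α`-shortcut reachable graph (`α > 1`) over a finite point set `P`
with nearest neighbor `a` of the query `q`, every vertex `v ≠ a` has an out-neighbor `u`
(possibly `u = a`) with `dist u q ≤ (dist v q + dist a q)/α + dist a q`; hence one greedy step
from `v` reaches a vertex at distance at most `(dist v q + dist a q)/α + dist a q` from `q`. -/
theorem shortcut_single_step {X : Type*} [MetricSpace X]
    (α : ℝ) (hα : 1 < α) (P : Finset X) (E : X → X → Prop)
    (hreach : ∀ x ∈ P, ∀ y ∈ P, x ≠ y →
      E x y ∨ ∃ x' ∈ P, E x x' ∧ α * dist x' y ≤ dist x y)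
    (q : X) (a : X) (ha : a ∈ P) (hnear : ∀ p ∈ P, dist a q ≤ dist p q)
    (v : X) (hv : v ∈ P) (hva : v ≠ a) :
    ∃ u ∈ P, E v u ∧ dist u q ≤ (dist v q + dist a q) / α + dist a q := by
  have hα0 : (0:ℝ) < α := lt_trans one_pos hα
  rcases hreach v hv a ha hva with hE | ⟨x', hx'P, hE, hshort⟩
  · refine ⟨a, ha, hE, ?_⟩
    have : 0 ≤ (dist v q + dist a q) / α :=
      div_nonneg (by positivity) hα0.le
    linarith
  · refine ⟨x', hx'P, hE, ?_⟩
    have h1 : dist x' q ≤ dist x' a + dist a q := dist_triangle _ _ _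
    have h2 : dist x' a ≤ dist v a / α := by
      rw [le_div_iff₀ hα0]; linarith [hshort, mul_comm α (dist x' a)]
    have h3 : dist v a ≤ dist v q + dist a q := by
      have := dist_triangle v q a
      rw [dist_comm q a] at this; linarith
    have h4 : dist v a / α ≤ (dist v q + dist a q) / α := by gcongr
    linarith
end
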